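/- Let ρ be a quantum state and σ a positive semidefinite operator with Tr(Π⊥ ρ) > ε, where Π⊥ projects onto ker(σ). Then there is no Hermitian R with R ≤ ρ, ‖ρ − R‖₊ ≤ ε, and Π⊥ R Π⊥ = 0. In particular the Hermitian-smoothed collision divergence inf{‖R‖²_{B,σ} : R Hermitian, R ≤ ρ, ‖ρ−R‖₊ ≤ ε} is infinite. -/

import Mathlib

open Matrix
open scoped ComplexOrder

/-- The square root of a positive semidefinite matrix (Mathlib's former `Matrix.PosSemidef.sqrt`). -/
noncomputable def Matrix.PosSemidef.sqrt {n 𝕜 : Type*} [Fintype n] [RCLike 𝕜] [DecidableEq n]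
    {A : Matrix n n 𝕜} (hA : A.PosSemidef) : Matrix n n 𝕜 :=
  hA.1.eigenvectorUnitary.1 * diagonal ((↑) ∘ (√·) ∘ hA.1.eigenvalues) *
    (star hA.1.eigenvectorUnitary : Matrix n n 𝕜)

/-- The Schatten 1-norm (trace norm) of a complex matrix: `Tr √(XᴴX)`. -/
noncomputable def traceNorm {n : Type*} [Fintype n] [DecidableEq n] (X : Matrix n n ℂ) : ℝ :=
  ((Matrix.posSemidef_conjTranspose_mul_self X).sqrt.trace).re

/-- The generalized trace distance norm `‖X‖₊ = (1/2)|Tr X| + (1/2)‖X‖₁`. -/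
noncomputable def normPlus {n : Type*} [Fintype n] [DecidableEq n] (X : Matrix n n ℂ) : ℝ :=
  (1 / 2) * ‖X.trace‖ + (1 / 2) * traceNorm X

/-!
Let `D = ρ - R ≥ 0`. Since `P R P = 0`, the compression `P D P` has the same trace as `P ρ`,
which exceeds `ε`. Compressing a positive semidefinite matrix by an orthogonal projection
cannot increase its trace, and for `D ≥ 0` the norm `‖D‖₊` is just `Tr D`; so
`ε < Tr (P ρ) ≤ Tr D = ‖D‖₊ ≤ ε`.
-/

namespace Matrix

variable {n 𝕜 : Type*} [Fintype n] [RCLike 𝕜]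

lemma trace_mul_mul_of_mul_self_eq {A P : Matrix n n 𝕜} (hP : P * P = P) :
    (P * A * P).trace = (P * A).trace := by
  rw [trace_mul_cycle, hP]

variable [DecidableEq n]

lemma PosSemidef.sqrt_eq_cfc {A : Matrix n n 𝕜} (hA : A.PosSemidef) :
    hA.sqrt = cfc Real.sqrt A := by
  rw [hA.1.cfc_eq, IsHermitian.cfc, Unitary.conjStarAlgAut_apply]
  rfl

lemma PosSemidef.sqrt_conjTranspose_mul_self {A : Matrix n n 𝕜} (hA : A.PosSemidef) :
    (posSemidef_conjTranspose_mul_self A).sqrt = A := by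
  have hsa : IsSelfAdjoint A := hA.1
  rw [PosSemidef.sqrt_eq_cfc, hA.1.eq, ← pow_two, ← cfc_pow_id (R := ℝ) A 2 hsa,
    ← cfc_comp' Real.sqrt (· ^ 2) A]
  conv_rhs => rw [← cfc_id' ℝ A hsa]
  refine cfc_congr fun x hx => ?_
  rw [hA.1.spectrum_real_eq_range_eigenvalues] at hx
  obtain ⟨i, rfl⟩ := hx
  exact Real.sqrt_sq (hA.eigenvalues_nonneg i)

lemma PosSemidef.trace_mul_mul_le_of_isHermitian_of_mul_self_eq {D P : Matrix n n 𝕜}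
    (hD : D.PosSemidef) (hP : P.IsHermitian) (hPP : P * P = P) :
    (P * D * P).trace ≤ D.trace := by
  have hQ : ((1 - P) * D * (1 - P)).PosSemidef := by
    have := hD.mul_mul_conjTranspose_same (1 - P)
    rwa [conjTranspose_sub, conjTranspose_one, hP.eq] at this
  have hQP : (1 - P) * (1 - P) = 1 - P := by
    rw [sub_mul, mul_sub, mul_sub, hPP]; simp
  have htr : ((1 - P) * D * (1 - P)).trace = D.trace - (P * D * P).trace := by
    rw [trace_mul_mul_of_mul_self_eq hQP, trace_mul_mul_of_mul_self_eq hPP, sub_mul, one_mul,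
      trace_sub]
  rw [← sub_nonneg, ← htr]
  exact hQ.trace_nonneg

lemma PosSemidef.traceNorm_eq {A : Matrix n n ℂ} (hA : A.PosSemidef) :
    traceNorm A = A.trace.re := by
  rw [traceNorm, hA.sqrt_conjTranspose_mul_self]

lemma PosSemidef.normPlus_eq {A : Matrix n n ℂ} (hA : A.PosSemidef) : normPlus A = A.trace.re := by
  rw [normPlus, hA.traceNorm_eq, ← Complex.re_eq_norm.mpr hA.trace_nonneg]
  ring

end Matrix

theorem no_feasible_hermitian_smoothing_of_kernel_weight_gt_general
    {n : Type*} [Fintype n] [DecidableEq n]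
    (ρ P : Matrix n n ℂ)
    (hP : P.IsHermitian) (hPproj : P * P = P)
    (ε : ℝ)
    (hgt : ε < ((P * ρ).trace).re) :
    ¬ ∃ R : Matrix n n ℂ, R.IsHermitian ∧ (ρ - R).PosSemidef ∧
        normPlus (ρ - R) ≤ ε ∧ P * R * P = 0 := by
  rintro ⟨R, -, hD, hnorm, hPRP⟩
  have hPDP : (P * (ρ - R) * P).trace = (P * ρ).trace := by
    rw [mul_sub, sub_mul, hPRP, sub_zero, trace_mul_mul_of_mul_self_eq hPproj]
  have hle := hD.trace_mul_mul_le_of_isHermitian_of_mul_self_eq hP hPproj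
  rw [hPDP] at hle
  rw [hD.normPlus_eq] at hnorm
  linarith [Complex.re_le_re hle]

/-- Diverging case of the Hermitian-smoothed collision divergence: if `ρ` is a state, `σ ≥ 0`,
and `Tr(Π⊥ ρ) > ε` where `Π⊥` is the orthogonal projection onto `ker σ`, then there is no
Hermitian `R ≤ ρ` with `‖ρ − R‖₊ ≤ ε` and `Π⊥ R Π⊥ = 0` (i.e. `R` in the range of `J_σ`),
so the infimum defining the Hermitian-smoothed divergence is over the empty set (infinite). -/
theorem no_feasible_hermitian_smoothing_of_kernel_weight_gt
    {n : Type*} [Fintype n] [DecidableEq n]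
    (ρ σ P : Matrix n n ℂ) (hρ : ρ.PosSemidef) (hρ1 : ρ.trace = 1) (hσ : σ.PosSemidef)
    (hP : P.IsHermitian) (hPproj : P * P = P)
    (hPker : ∀ v : n → ℂ, σ *ᵥ v = 0 ↔ P *ᵥ v = v)
    (ε : ℝ) (hε : ε ∈ Set.Ico (0 : ℝ) 1)
    (hgt : ε < ((P * ρ).trace).re) :
    ¬ ∃ R : Matrix n n ℂ, R.IsHermitian ∧ (ρ - R).PosSemidef ∧
        normPlus (ρ - R) ≤ ε ∧ P * R * P = 0 :=
  no_feasible_hermitian_smoothing_of_kernel_weight_gt_general ρ P hP hPproj ε hgt
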